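/- In any feasible update sequence for the update flow network G(C) constructed from a 3-SAT formula C, for every round r at or after the round in which s updates the blocking pair B and for every clause index i, at least one of the updates (u^i, D₁), (u^i, D₂), (u^i, D₃) was resolved strictly before round r. -/

import Mathlib

/-!
A formal model of congestion-free flow rerouting (network update scheduling).
An update flow network consists of a source `s`, a terminal `t`, edge
capacities, and `k` update flow pairs, each given by an old `s`-`t` path and
an update (new) `s`-`t` path (represented as lists of vertices) with a demand.
An update sequence assigns to every update `(v, i)` (vertex `v`, pair `i`) a
round; it is feasible if resolving all updates of earlier rounds together with
any subset of the current round always leaves, for every pair, a unique valid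
(capacity-respecting) transient `s`-`t` path among the active edges, and the
family of transient paths jointly respects the capacities.
-/

namespace FlowUpdate

variable {V : Type} [DecidableEq V] {k : ℕ}

/-- The edges of a path given as a list of vertices. -/
def edgesOf (p : List V) : List (V × V) := p.zip p.tail

/-- The subpath of `p` from vertex `a` to vertex `z` (inclusive). -/
def segment (p : List V) (a z : V) : List V :=
  ((p.dropWhile (fun v => decide (v ≠ a))).takeWhile (fun v => decide (v ≠ z))) ++ [z]

/-- The outgoing edge of `v` on the path `p`, if any. -/
def outEdge (p : List V) (v : V) : Option (V × V) :=
  (edgesOf p).find? (fun e => decide (e.1 = v))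

/-- An update flow network with `k` update flow pairs. -/
structure UFN (V : Type) (k : ℕ) where
  s : V
  t : V
  cap : V → V → ℕ
  old : Fin k → List V
  new : Fin k → List V
  demand : Fin k → ℕ

namespace UFN

/-- After resolving the set of updates `U`, edge `e` is active for pair `i` iff
it is an old edge whose tail is not yet updated, or a new edge whose tail is
updated. -/
def active (G : UFN V k) (U : Set (V × Fin k)) (i : Fin k) (e : V × V) : Prop :=
  (e ∈ edgesOf (G.old i) ∧ (e.1, i) ∉ U) ∨ (e ∈ edgesOf (G.new i) ∧ (e.1, i) ∈ U)

/-- `p` is a simple `s`-`t` path all of whose edges satisfy `E`. -/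
def IsPathIn (E : V × V → Prop) (s t : V) (p : List V) : Prop :=
  p.head? = some s ∧ p.getLast? = some t ∧ List.Chain' (fun u v => E (u, v)) p ∧ p.Nodup

/-- `p` respects the capacities for the demand of pair `i`. -/
def ValidPath (G : UFN V k) (i : Fin k) (p : List V) : Prop :=
  ∀ e ∈ edgesOf p, G.demand i ≤ G.cap e.1 e.2

/-- `T` is the unique valid transient path of pair `i` after resolving `U`. -/
def TransientPair (G : UFN V k) (U : Set (V × Fin k)) (i : Fin k) (T : List V) : Prop :=
  IsPathIn (G.active U i) G.s G.t T ∧ G.ValidPath i T ∧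
    ∀ p, IsPathIn (G.active U i) G.s G.t p → G.ValidPath i p → p = T

/-- After resolving `U`, every pair has a unique valid transient path, and the
family of transient paths jointly respects the capacities. -/
def TransientFamily (G : UFN V k) (U : Set (V × Fin k)) : Prop :=
  ∃ T : Fin k → List V,
    (∀ i, G.TransientPair U i (T i)) ∧
    (∀ u v : V, (∑ i : Fin k, if (u, v) ∈ edgesOf (T i) then G.demand i else 0) ≤ G.cap u v)

/-- An update sequence (an assignment of rounds to all updates) is feasible if
after resolving all updates of rounds `< r` together with any subset of the
updates of round `r`, all pairs admit a transient family. -/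
def Feasible (G : UFN V k) (R : V × Fin k → ℕ) : Prop :=
  ∀ r : ℕ, ∀ S : Set (V × Fin k), (∀ u ∈ S, R u = r) →
    G.TransientFamily ({u | R u < r} ∪ S)

/-- `p` is a simple path from the source to the terminal. -/
def IsStPath (G : UFN V k) (p : List V) : Prop :=
  p.head? = some G.s ∧ p.getLast? = some G.t ∧ p.Nodup

/-- Well-formedness of an update flow network: all old and new flows are simple
`s`-`t` paths, each pair forms a DAG, each new path respects capacities for its
own demand, and both the old family and the new family jointly respect the
capacities. -/
def WellFormed (G : UFN V k) : Prop :=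
  (∀ i, G.IsStPath (G.old i) ∧ G.IsStPath (G.new i)) ∧
  (∀ i, ∃ ord : V → ℕ, ∀ e ∈ edgesOf (G.old i) ++ edgesOf (G.new i), ord e.1 < ord e.2) ∧
  (∀ i, G.ValidPath i (G.new i)) ∧
  (∀ u v : V, (∑ i : Fin k, if (u, v) ∈ edgesOf (G.old i) then G.demand i else 0) ≤ G.cap u v) ∧
  (∀ u v : V, (∑ i : Fin k, if (u, v) ∈ edgesOf (G.new i) then G.demand i else 0) ≤ G.cap u v)

/-- The common vertices of the old and new path of pair `i`, in path order. -/
def commons (G : UFN V k) (i : Fin k) : List V :=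
  (G.old i).filter (fun v => decide (v ∈ G.new i))

/-- A block of pair `i` is a pair `(a, z)` of consecutive common vertices of the
old and new paths of `i`. -/
def IsBlock (G : UFN V k) (i : Fin k) (b : V × V) : Prop :=
  b ∈ edgesOf (G.commons i)

/-- A (candidate) block: a pair index together with its start and end vertices. -/
abbrev Blk (V : Type) (k : ℕ) := Fin k × V × V

def IsBlk (G : UFN V k) (b : Blk V k) : Prop := G.IsBlock b.1 b.2

/-- The old-path segment of a block. -/
def blkOldSeg (G : UFN V k) (b : Blk V k) : List V := segment (G.old b.1) b.2.1 b.2.2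

/-- The update-path segment of a block. -/
def blkNewSeg (G : UFN V k) (b : Blk V k) : List V := segment (G.new b.1) b.2.1 b.2.2

/-- Block `b1` depends on block `b2` (written `b1 → b2`) if they belong to
different pairs and some edge lies on `b1`'s update path and on `b2`'s old path
with capacity less than the sum of the two demands. -/
def Dep (G : UFN V k) (b1 b2 : Blk V k) : Prop :=
  G.IsBlk b1 ∧ G.IsBlk b2 ∧ b1.1 ≠ b2.1 ∧
  ∃ e : V × V, e ∈ edgesOf (G.blkNewSeg b1) ∧ e ∈ edgesOf (G.blkOldSeg b2) ∧
    G.cap e.1 e.2 < G.demand b1.1 + G.demand b2.1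

/-- The dependency graph contains a directed cycle. -/
def HasDepCycle (G : UFN V k) : Prop := ∃ b : Blk V k, Relation.TransGen G.Dep b b

/-- The number of rounds used by an update sequence. -/
def numRounds [Fintype V] (R : V × Fin k → ℕ) : ℕ :=
  (Finset.image R Finset.univ).card

/-- An update `(v, i)` is empty if `v`'s outgoing old edge and outgoing new edge
for pair `i` coincide (in particular if `v` has no outgoing edge for pair `i`). -/
def EmptyUpd (G : UFN V k) (u : V × Fin k) : Prop :=
  outEdge (G.old u.2) u.1 = outEdge (G.new u.2) u.1

instance (G : UFN V k) (u : V × Fin k) : Decidable (G.EmptyUpd u) :=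
  inferInstanceAs (Decidable (outEdge (G.old u.2) u.1 = outEdge (G.new u.2) u.1))

/-- `R` updates every block in (at most) 3 consecutive rounds: first all internal
update-path vertices of the block, then the start vertex, then all old-path-only
vertices of the block. -/
def BlockPattern (G : UFN V k) (R : V × Fin k → ℕ) : Prop :=
  ∀ b : Blk V k, G.IsBlk b → ∃ r : ℕ,
    (∀ v ∈ G.blkNewSeg b, v ≠ b.2.1 → v ≠ b.2.2 → R (v, b.1) = r) ∧
    R (b.2.1, b.1) = r + 1 ∧
    (∀ v ∈ G.blkOldSeg b, v ∉ G.new b.1 → R (v, b.1) = r + 2)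

/-- The size of the network (total length of the flow paths). -/
def size (G : UFN V k) : ℕ := ∑ i : Fin k, ((G.old i).length + (G.new i).length)

end UFN

end FlowUpdate

namespace FlowUpdate

/-! The update flow network `GC C n` constructed from a 3-SAT formula `C` with
`n` variables, as in the NP-hardness reduction.  The six flow pairs are indexed
by `Fin 6`: `0 = X`, `1 = X̄`, `2,3,4 = D₁,D₂,D₃`, `5 = B`; all have demand 1. -/

/-- A 3-SAT clause: three literals, each a variable index with a polarity. -/
abbrev Clause := Fin 3 → ℕ × Bool

/-- `σ` satisfies the formula `C`. -/
def Satisfies (C : List Clause) (σ : ℕ → Bool) : Prop :=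
  ∀ cl ∈ C, ∃ p : Fin 3, σ (cl p).1 = (cl p).2

/-- All variable indices occurring in `C` are `< n`. -/
def GoodFormula (C : List Clause) (n : ℕ) : Prop :=
  ∀ cl ∈ C, ∀ p : Fin 3, (cl p).1 < n

/-- The vertices of the network `GC C n`. -/
inductive GV where
  | s | t
  | u (i : ℕ) | v (i : ℕ)
  | uu (i : ℕ) (j : Fin 3) | vv (i : ℕ) (j : Fin 3)
  | w1 (j : ℕ) | w2 (j : ℕ)
deriving DecidableEq

/-- Capacities: `(w1 j, w2 j)` has capacity 2, `(u i, v i)` capacity 3, the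
detour edges `(uu i p, vv i p)` capacity 1, all other edges capacity 6. -/
def capC : GV → GV → ℕ
  | .w1 j, .w2 j' => if j = j' then 2 else 6
  | .u i, .v i' => if i = i' then 3 else 6
  | .uu i p, .vv i' p' => if i = i' ∧ p = p' then 1 else 6
  | _, _ => 6

/-- The occurrences (clause index, position) of the literal `(j, pol)` in `C`. -/
def occ (C : List Clause) (j : ℕ) (pol : Bool) : List (ℕ × Fin 3) :=
  (List.range C.length).flatMap fun i =>
    (List.finRange 3).filterMap fun p =>
      if (C.getD i (fun _ => (0, true))) p = (j, pol) then some (i, p) else none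

/-- The detour vertices visited by the old path of the literal `(j, pol)`. -/
def litPath (C : List Clause) (j : ℕ) (pol : Bool) : List GV :=
  (occ C j pol).flatMap fun ip => [GV.uu ip.1 ip.2, GV.vv ip.1 ip.2]

/-- The old path of `X` (`pol = true`) resp. of `X̄` (`pol = false`). -/
def Xold (C : List Clause) (n : ℕ) (pol : Bool) : List GV :=
  [GV.s] ++ ((List.range n).flatMap fun j => [GV.w1 j] ++ litPath C j pol ++ [GV.w2 j]) ++ [GV.t]

/-- The update path of `X` and `X̄`, which is also the old path of `B`. -/
def Xupd (n : ℕ) : List GV :=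
  [GV.s] ++ ((List.range n).flatMap fun j => [GV.w1 j, GV.w2 j]) ++ [GV.t]

/-- The old path of each `D_j`, which is also the update path of `B`. -/
def Dold (m : ℕ) : List GV :=
  [GV.s] ++ ((List.range m).flatMap fun i => [GV.u i, GV.v i]) ++ [GV.t]

/-- The update path of `D_j`, detouring each clause edge through `(uu i j, vv i j)`. -/
def Dupd (m : ℕ) (j : Fin 3) : List GV :=
  [GV.s] ++ ((List.range m).flatMap fun i => [GV.u i, GV.uu i j, GV.vv i j, GV.v i]) ++ [GV.t]

/-- The update flow network constructed from the 3-SAT formula `C` with `n`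
variables. -/
def GC (C : List Clause) (n : ℕ) : UFN GV 6 where
  s := GV.s
  t := GV.t
  cap := capC
  old := ![Xold C n true, Xold C n false, Dold C.length, Dold C.length, Dold C.length, Xupd n]
  new := ![Xupd n, Xupd n, Dupd C.length 0, Dupd C.length 1, Dupd C.length 2, Dold C.length]
  demand := fun _ => 1

end FlowUpdate

/-!
Fix a round `r` with `R (s, B) ≤ r` and resolve the earlier updates together with `(s, B)`.
Every transient path leaves the set of vertices that the `D`-paths visit up to `u i`
along an active edge. For a `D`-pair that has not updated `u i` this edge must be the old clause
edge `(u i, v i)`: its update path leaves that set through `(u i, uu i j)`, which is inactive.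
For `B` the old edges leaving the set start at the updated `s`, so the edge is `(u i, v i)` on
its update path. If no `D`-pair had updated `u i`, four unit demands would cross an edge of
capacity 3.
-/

namespace FlowUpdate

section Paths

variable {α : Type}

@[simp] lemma edgesOf_cons_cons (a b : α) (p : List α) :
    edgesOf (a :: b :: p) = (a, b) :: edgesOf (b :: p) := rfl

@[simp] lemma edgesOf_singleton (a : α) : edgesOf [a] = [] := rfl

@[simp] lemma edgesOf_nil : edgesOf ([] : List α) = [] := rfl

lemma mem_of_mem_edgesOf {e : α × α} {p : List α} (he : e ∈ edgesOf p) :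
    e.1 ∈ p ∧ e.2 ∈ p :=
  ⟨(List.of_mem_zip he).1, List.mem_of_mem_tail (List.of_mem_zip he).2⟩

lemma rel_of_mem_edgesOf {R : α → α → Prop} :
    ∀ {p : List α}, p.IsChain R → ∀ {e : α × α}, e ∈ edgesOf p → R e.1 e.2
  | [], _, _, he | [_], _, _, he => by simp at he
  | a :: b :: p, h, e, he => by
      rw [List.isChain_cons_cons] at h
      rcases List.mem_cons.mp he with rfl | he
      · exact h.1
      · exact rel_of_mem_edgesOf h.2 he

lemma exists_mem_edgesOf_not_of_head_of_getLast (P : α → Prop) :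
    ∀ {p : List α} {a b : α}, p.head? = some a → p.getLast? = some b → P a → ¬ P b →
      ∃ e ∈ edgesOf p, P e.1 ∧ ¬ P e.2
  | [], _, _, ha, _, _, _ => by simp at ha
  | [_], _, _, ha, hb, hPa, hPb => by simp_all
  | x :: y :: p, a, b, ha, hb, hPa, hPb => by
      obtain rfl : x = a := by simpa using ha
      by_cases hPy : P y
      · obtain ⟨e, he, hPe⟩ :=
          exists_mem_edgesOf_not_of_head_of_getLast P rfl (by simpa using hb) hPy hPb
        exact ⟨e, by simp [he], hPe⟩
      · exact ⟨(x, y), by simp, hPa, hPy⟩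

lemma getLast?_eq_and_head?_eq_of_mem_edgesOf_append {P : α → Prop} :
    ∀ {A B : List α}, (∀ a ∈ A, P a) → (∀ b ∈ B, ¬ P b) → ∀ {x y : α},
      (x, y) ∈ edgesOf (A ++ B) → P x → ¬ P y → A.getLast? = some x ∧ B.head? = some y
  | [], _, _, hB, _, _, he, hx, _ => absurd hx (hB _ (mem_of_mem_edgesOf he).1)
  | [_], [], _, _, _, _, he, _, _ => by simp at he
  | [a], b :: B, _, hB, x, y, he, hx, _ => by
      rw [List.singleton_append, edgesOf_cons_cons] at he
      rcases List.mem_cons.mp he with h | h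
      · simp_all
      · exact absurd hx (hB _ (mem_of_mem_edgesOf h).1)
  | a :: a' :: A, B, hA, hB, x, y, he, hx, hy => by
      rcases List.mem_cons.mp he with h | h
      · exact absurd (hA a' (by simp)) (by simpa [(Prod.mk.inj h).2] using hy)
      · rw [List.getLast?_cons_cons]
        exact getLast?_eq_and_head?_eq_of_mem_edgesOf_append
          (fun c hc => hA c (List.mem_cons_of_mem _ hc)) hB h hx hy

lemma UFN.IsPathIn.exists_mem_edgesOf_leaving {E : α × α → Prop} {s t : α} {p : List α}
    (hp : UFN.IsPathIn E s t p) (P : α → Prop) (hs : P s) (ht : ¬ P t) :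
    ∃ e ∈ edgesOf p, P e.1 ∧ ¬ P e.2 ∧ E e := by
  obtain ⟨e, he, hPe⟩ := exists_mem_edgesOf_not_of_head_of_getLast P hp.1 hp.2.1 hs ht
  exact ⟨e, he, hPe.1, hPe.2, rel_of_mem_edgesOf (R := fun u v => E (u, v)) hp.2.2.1 he⟩

end Paths

lemma flatMap_range_eq_of_lt {β : Type} (f : ℕ → List β) {i m : ℕ} (h : i < m) :
    (List.range m).flatMap f = (List.range i).flatMap f ++ f i ++
      (List.range (m - (i + 1))).flatMap (fun j => f (i + 1 + j)) := by
  obtain ⟨k, rfl⟩ : ∃ k, m = i + 1 + k := ⟨m - (i + 1), by omega⟩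
  simp [List.range_add, List.range_succ, List.flatMap_map]

/-- The vertices that the `D`-paths `Dold` and `Dupd` visit up to and including `u i`. -/
def UpToU (i : ℕ) : GV → Prop
  | .s => True
  | .u i' => i' ≤ i
  | .uu i' _ | .vv i' _ | .v i' => i' < i
  | _ => False

lemma eq_u_of_mem_edgesOf_clausePath {m i : ℕ} (hi : i < m) (g : ℕ → List GV)
    (hg : ∀ i', g i' ≠ []) (hgU : ∀ i', ∀ x ∈ g i', UpToU i x ↔ i' < i) {e : GV × GV}
    (he : e ∈ edgesOf ([GV.s] ++ (List.range m).flatMap (fun i' => GV.u i' :: g i') ++ [GV.t]))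
    (hin : UpToU i e.1) (hout : ¬ UpToU i e.2) :
    e.1 = GV.u i ∧ (g i).head? = some e.2 := by
  rw [flatMap_range_eq_of_lt _ hi, show ∀ A B : List GV,
      [GV.s] ++ (A ++ (GV.u i :: g i) ++ B) ++ [GV.t] =
        ([GV.s] ++ A ++ [GV.u i]) ++ (g i ++ B ++ [GV.t]) by simp] at he
  have hA : ∀ x ∈ [GV.s] ++ (List.range i).flatMap (fun i' => GV.u i' :: g i') ++ [GV.u i],
      UpToU i x := by
    simp only [List.mem_append, List.mem_flatMap, List.mem_range, List.mem_cons,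
      List.not_mem_nil, or_false]
    rintro x ((rfl | ⟨i', hi', rfl | hx⟩) | rfl)
    · trivial
    · exact hi'.le
    · exact (hgU i' x hx).2 hi'
    · exact le_rfl
  have hB : ∀ x ∈ g i ++ (List.range (m - (i + 1))).flatMap
      (fun j => GV.u (i + 1 + j) :: g (i + 1 + j)) ++ [GV.t], ¬ UpToU i x := by
    simp only [List.mem_append, List.mem_flatMap, List.mem_range, List.mem_cons,
      List.not_mem_nil, or_false]
    rintro x ((hx | ⟨j, -, rfl | hx⟩) | rfl) hxU
    · exact lt_irrefl i ((hgU i x hx).1 hxU)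
    · exact absurd hxU (show ¬ i + 1 + j ≤ i by omega)
    · exact absurd ((hgU _ x hx).1 hxU) (by omega)
    · exact hxU
  obtain ⟨hlast, hhead⟩ := getLast?_eq_and_head?_eq_of_mem_edgesOf_append hA hB he hin hout
  rw [List.append_assoc, List.head?_append_of_ne_nil _ (hg i)] at hhead
  refine ⟨?_, hhead⟩
  simpa [List.getLast?_cons, eq_comm] using hlast

lemma eq_uv_of_mem_edgesOf_Dold {m i : ℕ} (hi : i < m) {e : GV × GV}
    (he : e ∈ edgesOf (Dold m))
    (hin : UpToU i e.1) (hout : ¬ UpToU i e.2) : e = (GV.u i, GV.v i) := by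
  obtain ⟨he1, he2⟩ := eq_u_of_mem_edgesOf_clausePath hi (fun i' => [GV.v i']) (by simp)
    (by simp [UpToU]) he hin hout
  exact Prod.ext he1 (by simpa [eq_comm] using he2)

lemma eq_u_of_mem_edgesOf_Dupd {m i : ℕ} {j : Fin 3} (hi : i < m) {e : GV × GV}
    (he : e ∈ edgesOf (Dupd m j)) (hin : UpToU i e.1) (hout : ¬ UpToU i e.2) : e.1 = GV.u i :=
  (eq_u_of_mem_edgesOf_clausePath hi (fun i' => [GV.uu i' j, GV.vv i' j, GV.v i']) (by simp)
    (by simp [UpToU]) he hin hout).1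

lemma eq_s_of_mem_Xupd {n i : ℕ} {x : GV} (hx : x ∈ Xupd n) (hxU : UpToU i x) : x = GV.s := by
  simp only [Xupd, List.cons_append, List.nil_append, List.mem_cons, List.mem_append,
    List.mem_flatMap, List.mem_range, List.not_mem_nil, or_false] at hx
  rcases hx with rfl | ⟨j, -, rfl | rfl⟩ | rfl <;> first | rfl | exact hxU.elim

section Transient

variable {k : ℕ} {G : UFN GV k} {U : Set (GV × Fin k)} {p : Fin k} {T : List GV} {i m : ℕ}

lemma uv_mem_edgesOf_of_old_eq_Dold {j : Fin 3} (hi : i < m) (hold : G.old p = Dold m)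
    (hnew : G.new p = Dupd m j) (hp : (GV.u i, p) ∉ U)
    (hT : UFN.IsPathIn (G.active U p) GV.s GV.t T) : (GV.u i, GV.v i) ∈ edgesOf T := by
  obtain ⟨e, he, hin, hout, hact | hact⟩ := hT.exists_mem_edgesOf_leaving (UpToU i) trivial id
  · rw [hold] at hact
    rwa [← eq_uv_of_mem_edgesOf_Dold hi hact.1 hin hout]
  · rw [hnew] at hact
    exact absurd (eq_u_of_mem_edgesOf_Dupd hi hact.1 hin hout ▸ hact.2) hp

lemma uv_mem_edgesOf_of_new_eq_Dold {n : ℕ} (hi : i < m) (hold : G.old p = Xupd n)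
    (hnew : G.new p = Dold m) (hp : (GV.s, p) ∈ U)
    (hT : UFN.IsPathIn (G.active U p) GV.s GV.t T) : (GV.u i, GV.v i) ∈ edgesOf T := by
  obtain ⟨e, he, hin, hout, hact | hact⟩ := hT.exists_mem_edgesOf_leaving (UpToU i) trivial id
  · rw [hold] at hact
    exact absurd (eq_s_of_mem_Xupd (mem_of_mem_edgesOf hact.1).1 hin ▸ hp) hact.2
  · rw [hnew] at hact
    rwa [← eq_uv_of_mem_edgesOf_Dold hi hact.1 hin hout]

end Transient

end FlowUpdate

open FlowUpdate in
theorem stmt10_general (C : List Clause) (n : ℕ)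
    (R : GV × Fin 6 → ℕ) (hR : (GC C n).Feasible R)
    (r : ℕ) (hr : R (GV.s, 5) ≤ r) (i : ℕ) (hi : i < C.length) :
    R (GV.u i, 2) < r ∨ R (GV.u i, 3) < r ∨ R (GV.u i, 4) < r := by
  by_contra! hlate
  obtain ⟨h2, h3, h4⟩ := hlate
  set S : Set (GV × Fin 6) := {x | x = (GV.s, 5) ∧ R x = r}
  obtain ⟨T, hT, hcap⟩ := hR r S fun _ hx => hx.2
  have hB : (GV.s, (5 : Fin 6)) ∈ {x | R x < r} ∪ S :=
    (lt_or_eq_of_le hr).imp id fun h => ⟨rfl, h⟩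
  have hD : ∀ q, r ≤ R (GV.u i, q) → (GV.u i, q) ∉ {x | R x < r} ∪ S := by
    rintro q hq (h | ⟨h, -⟩)
    · exact absurd h (not_lt.2 hq)
    · simp at h
  have hT2 := uv_mem_edgesOf_of_old_eq_Dold (j := 0) hi rfl rfl (hD 2 h2) (hT 2).1
  have hT3 := uv_mem_edgesOf_of_old_eq_Dold (j := 1) hi rfl rfl (hD 3 h3) (hT 3).1
  have hT4 := uv_mem_edgesOf_of_old_eq_Dold (j := 2) hi rfl rfl (hD 4 h4) (hT 4).1
  have hT5 := uv_mem_edgesOf_of_new_eq_Dold hi rfl rfl hB (hT 5).1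
  have hload := hcap (GV.u i) (GV.v i)
  rw [Fin.sum_univ_six, if_pos hT2, if_pos hT3, if_pos hT4, if_pos hT5] at hload
  simp only [GC, capC, if_true] at hload
  omega

open FlowUpdate in
/-- In any feasible update sequence for `G(C)`, for every round
`r` at or after the round in which `s` updates the blocking pair `B` and every
clause index `i`, at least one of the updates `(u i, D₁)`, `(u i, D₂)`,
`(u i, D₃)` was resolved strictly before round `r`. -/
theorem stmt10 (C : List Clause) (n : ℕ) (hC : GoodFormula C n)
    (R : GV × Fin 6 → ℕ) (hR : (GC C n).Feasible R)
    (r : ℕ) (hr : R (GV.s, 5) ≤ r) (i : ℕ) (hi : i < C.length) :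
    R (GV.u i, 2) < r ∨ R (GV.u i, 3) < r ∨ R (GV.u i, 4) < r :=
  stmt10_general C n R hR r hr i hi
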